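/- Let γ ≥ 2 + π/2 and define x̄ : ℝ → ℝ by x̄(t) = 1/2 + π/(4γ) + √(1/2 − 1/γ − (π/(2γ²))(1 + π/4)) · sin(πt/2). Then for every t ∈ ℝ, x̄(t) = (γ/2) ∫_{−3}^{−1} x̄(t+θ)(1 − x̄(t+θ)) dθ, and x̄ is 4-periodic, i.e., x̄(t+4) = x̄(t) for all t ∈ ℝ. -/

import Mathlib

open Real intervalIntegral

/-!
Try `x(t) = a + b sin(πt/2)`. Then `x(1 - x) = a(1 - a) + b(1 - 2a) sin u - b² sin² u` with
`u = π(t + θ)/2`. The window `θ ∈ [-3, -1]` has length 2, a full period of `sin²`, so that term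
integrates to `b²`, while the `sin` term integrates to `-(4/π) b(1 - 2a) sin(πt/2)`. Matching the
constant and the `sin(πt/2)` coefficients gives `1 - 2a = -π/(2γ)` and
`γ(a(1 - a) - b²/2) = a`, which are the stated values of `a` and `b²`.
-/

theorem integral_sin_add_pi (a : ℝ) : ∫ x in a..a + π, sin x = 2 * cos a := by
  rw [integral_sin, cos_add_pi]; ring

theorem integral_sin_sq_add_pi (a : ℝ) : ∫ x in a..a + π, sin x ^ 2 = π / 2 := by
  rw [integral_sin_sq, sin_add_pi, cos_add_pi]; ring

theorem integral_delay_window_comp (f : ℝ → ℝ) (t : ℝ) :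
    ∫ θ in (-3 : ℝ)..(-1), f (π / 2 * (t + θ)) =
      2 / π * ∫ x in π / 2 * t - 3 * π / 2..π / 2 * t - 3 * π / 2 + π, f x := by
  have hω : π / 2 ≠ 0 := by positivity
  simp_rw [mul_add, add_comm (π / 2 * t)]
  rw [integral_comp_mul_add f hω, smul_eq_mul, inv_div]
  congr 2 <;> ring

theorem integral_delay_window_sin (t : ℝ) :
    ∫ θ in (-3 : ℝ)..(-1), sin (π / 2 * (t + θ)) = -(4 / π) * sin (π / 2 * t) := by
  rw [integral_delay_window_comp sin, integral_sin_add_pi,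
    show π / 2 * t - 3 * π / 2 = π / 2 * t + π / 2 - 2 * π by ring, cos_sub_two_pi,
    cos_add_pi_div_two]
  ring

theorem integral_delay_window_sin_sq (t : ℝ) :
    ∫ θ in (-3 : ℝ)..(-1), sin (π / 2 * (t + θ)) ^ 2 = 1 := by
  rw [integral_delay_window_comp (sin · ^ 2), integral_sin_sq_add_pi]
  field_simp

theorem integral_delay_window_logistic_sine (a b t : ℝ) :
    ∫ θ in (-3 : ℝ)..(-1), (a + b * sin (π / 2 * (t + θ))) * (1 - (a + b * sin (π / 2 * (t + θ)))) =
      2 * a * (1 - a) - b ^ 2 - 4 / π * b * (1 - 2 * a) * sin (π / 2 * t) := by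
  have hexpand : ∀ θ : ℝ, (a + b * sin (π / 2 * (t + θ))) * (1 - (a + b * sin (π / 2 * (t + θ)))) =
      a * (1 - a) + b * (1 - 2 * a) * sin (π / 2 * (t + θ)) - b ^ 2 * sin (π / 2 * (t + θ)) ^ 2 :=
    fun θ => by ring
  have hsin : IntervalIntegrable (fun θ => sin (π / 2 * (t + θ))) MeasureTheory.volume (-3) (-1) :=
    (by fun_prop : Continuous _).intervalIntegrable _ _
  have hsin2 :
      IntervalIntegrable (fun θ => sin (π / 2 * (t + θ)) ^ 2) MeasureTheory.volume (-3) (-1) :=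
    (by fun_prop : Continuous _).intervalIntegrable _ _
  simp_rw [hexpand]
  rw [integral_sub (intervalIntegrable_const.add (hsin.const_mul _)) (hsin2.const_mul _),
    integral_add intervalIntegrable_const (hsin.const_mul _), integral_const,
    integral_const_mul, integral_const_mul, integral_delay_window_sin,
    integral_delay_window_sin_sq, smul_eq_mul]
  ring

theorem add_mul_sin_solves_renewal {γ a b : ℝ} (hconst : γ * (a * (1 - a) - b ^ 2 / 2) = a)
    (hsin_coeff : 2 * γ * (1 - 2 * a) = -π) (t : ℝ) :
    a + b * sin (π / 2 * t) = γ / 2 * ∫ θ in (-3 : ℝ)..(-1),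
      (a + b * sin (π / 2 * (t + θ))) * (1 - (a + b * sin (π / 2 * (t + θ)))) := by
  rw [integral_delay_window_logistic_sine]
  have hπ : π ≠ 0 := pi_ne_zero
  linear_combination (norm := skip) -hconst + b * sin (π / 2 * t) / π * hsin_coeff
  field_simp
  ring

theorem amplitude_sq_nonneg {γ : ℝ} (hγ : 2 + π / 2 ≤ γ) :
    0 ≤ 1 / 2 - 1 / γ - π / (2 * γ ^ 2) * (1 + π / 4) := by
  have hγ0 : 0 < γ := by linarith [pi_pos]
  have hfactor : 1 / 2 - 1 / γ - π / (2 * γ ^ 2) * (1 + π / 4) =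
      (γ - 2 - π / 2) * (γ + π / 2) / (2 * γ ^ 2) := by
    field_simp; ring
  rw [hfactor]
  have : 0 ≤ γ - 2 - π / 2 := by linarith
  positivity

/-- For `γ ≥ 2 + π/2`, the function
`x̄(t) = 1/2 + π/(4γ) + √(1/2 - 1/γ - (π/(2γ²))(1 + π/4)) · sin(πt/2)`
is a 4-periodic solution of the renewal equation with quadratic nonlinearity
`x(t) = (γ/2) ∫_{-3}^{-1} x(t+θ)(1 - x(t+θ)) dθ`. -/
theorem quadRE_explicit_periodic_solution (γ : ℝ) (hγ : 2 + Real.pi / 2 ≤ γ)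
    (xbar : ℝ → ℝ)
    (hxbar : ∀ t : ℝ, xbar t =
      1 / 2 + Real.pi / (4 * γ) +
        Real.sqrt (1 / 2 - 1 / γ - Real.pi / (2 * γ ^ 2) * (1 + Real.pi / 4)) *
          Real.sin (Real.pi / 2 * t)) :
    (∀ t : ℝ, xbar t =
      γ / 2 * ∫ θ in (-3 : ℝ)..(-1 : ℝ), xbar (t + θ) * (1 - xbar (t + θ))) ∧
    (∀ t : ℝ, xbar (t + 4) = xbar t) := by
  have hγ0 : γ ≠ 0 := by linarith [pi_pos]
  have hb := sq_sqrt (amplitude_sq_nonneg hγ)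
  refine ⟨fun t => ?_, fun t => ?_⟩
  · simp only [hxbar]
    refine add_mul_sin_solves_renewal ?_ ?_ t
    · rw [hb]; field_simp; ring
    · field_simp; ring
  · rw [hxbar, hxbar, show π / 2 * (t + 4) = π / 2 * t + 2 * π by ring, sin_add_two_pi]
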